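/- Let H and D be complex Hilbert spaces, U a unitary operator on H, B : D → H a linear isometry, Γ a strict contraction on D, and T := U + B(Γ − I)B*U (a contraction). Then for every z in the open unit disc 𝔻 the operator I − F₁(z)(Γ* − I) is invertible and B*(−T + zD_{T*}(I − zT*)⁻¹D_T)U*B = −Γ + D_{Γ*}[I − F₁(z)(Γ* − I)]⁻¹F₁(z)D_Γ, where F₁(z) := zB*(I − zU*)⁻¹U*B. -/

import Mathlib

/-! With `V := U* B`, an isometry, one has `T = U + B (Γ - 1) V*`, and a direct computation gives
`1 - T T* = B (1 - Γ Γ*) B*` and `1 - T* T = V (1 - Γ* Γ) V*`. Square roots commute with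
conjugation by isometries, so the defect operators of `T` are those of `Γ` transported by `B` and
`V`; in particular `T` is a contraction. Next, `1 - z T*` factors as `(1 - z U*) (1 - X C)` with
`X = z (1 - z U*)⁻¹ V` and `C = (Γ* - 1) B*`, where `B* X = F₁` and `C X = (Γ* - 1) F₁`. The
push-through identity `(1 - X C)⁻¹ X = X (1 - C X)⁻¹`, together with the fact that `1 - X C` and
`1 - C X` are invertible together, turns `z B* (1 - z T*)⁻¹ V` into `(1 - F₁ (Γ* - 1))⁻¹ F₁`. -/

open ContinuousLinearMap

section PushThrough

variable {R E F : Type*} [Ring R] [TopologicalSpace E] [AddCommGroup E] [Module R E]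
  [IsTopologicalAddGroup E] [TopologicalSpace F] [AddCommGroup F] [Module R F]
  [IsTopologicalAddGroup F]

theorem comp_one_sub_comp (X : E →L[R] F) (C : F →L[R] E) :
    X ∘L (1 - C ∘L X) = (1 - X ∘L C) ∘L X := by
  rw [comp_sub, sub_comp, comp_assoc]; rfl

theorem IsUnit.one_sub_comp_swap {X : E →L[R] F} {C : F →L[R] E}
    (h : IsUnit (1 - X ∘L C)) : IsUnit (1 - C ∘L X) := by
  set V := Ring.inverse (1 - X ∘L C)
  have hV : (1 - X ∘L C) ∘L V = 1 := Ring.mul_inverse_cancel _ h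
  have hV' : V ∘L (1 - X ∘L C) = 1 := Ring.inverse_mul_cancel _ h
  refine isUnit_iff_exists.mpr ⟨1 + C ∘L V ∘L X, ?_, ?_⟩
  · calc (1 - C ∘L X) * (1 + C ∘L V ∘L X)
        = 1 - C ∘L X + C ∘L ((1 - X ∘L C) ∘L V) ∘L X := by
          simp only [mul_def, sub_comp, comp_sub, comp_add, comp_assoc, one_def, id_comp, comp_id]
      _ = 1 := by rw [hV]; simp only [one_def, id_comp, sub_add_cancel]
  · calc (1 + C ∘L V ∘L X) * (1 - C ∘L X)
        = 1 - C ∘L X + C ∘L (V ∘L (1 - X ∘L C)) ∘L X := by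
          simp only [mul_def, sub_comp, comp_sub, add_comp, comp_assoc, one_def, id_comp, comp_id]
          abel
      _ = 1 := by rw [hV']; simp only [one_def, id_comp, sub_add_cancel]

theorem isUnit_one_sub_comp_comm (X : E →L[R] F) (C : F →L[R] E) :
    IsUnit (1 - X ∘L C) ↔ IsUnit (1 - C ∘L X) :=
  ⟨IsUnit.one_sub_comp_swap, IsUnit.one_sub_comp_swap⟩

theorem inverse_one_sub_comp_comp (X : E →L[R] F) (C : F →L[R] E) :
    Ring.inverse (1 - X ∘L C) ∘L X = X ∘L Ring.inverse (1 - C ∘L X) := by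
  by_cases h : IsUnit (1 - C ∘L X)
  · have h' := (isUnit_one_sub_comp_comm X C).mpr h
    calc Ring.inverse (1 - X ∘L C) ∘L X
        = Ring.inverse (1 - X ∘L C) ∘L X ∘L ((1 - C ∘L X) * Ring.inverse (1 - C ∘L X)) := by
          rw [Ring.mul_inverse_cancel _ h]; simp only [one_def, comp_id]
      _ = Ring.inverse (1 - X ∘L C) ∘L ((1 - X ∘L C) ∘L X) ∘L Ring.inverse (1 - C ∘L X) := by
          rw [mul_def, ← comp_one_sub_comp]; simp only [comp_assoc]
      _ = X ∘L Ring.inverse (1 - C ∘L X) := by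
          rw [← comp_assoc, ← comp_assoc, ← mul_def, Ring.inverse_mul_cancel _ h']
          simp only [one_def, id_comp]
  · rw [Ring.inverse_non_unit _ h,
      Ring.inverse_non_unit _ (mt (isUnit_one_sub_comp_comm X C).mp h), zero_comp, comp_zero]

end PushThrough

section CStarAlgebra

variable {A : Type*} [CStarAlgebra A] [PartialOrder A] [StarOrderedRing A]

theorem CStarAlgebra.star_mul_self_le_one_iff (a : A) : star a * a ≤ 1 ↔ ‖a‖ ≤ 1 := by
  rw [← norm_le_one_iff_of_nonneg _ (star_mul_self_nonneg a), CStarRing.norm_star_mul_self, ← sq,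
    sq_le_one_iff₀ (norm_nonneg a)]

theorem CStarAlgebra.one_sub_star_mul_self_nonneg {a : A} (ha : ‖a‖ ≤ 1) :
    0 ≤ 1 - star a * a :=
  sub_nonneg.mpr ((star_mul_self_le_one_iff a).mpr ha)

theorem CStarAlgebra.one_sub_mul_star_self_nonneg {a : A} (ha : ‖a‖ ≤ 1) :
    0 ≤ 1 - a * star a := by
  simpa using one_sub_star_mul_self_nonneg (a := star a) (by rwa [norm_star])

theorem CStarAlgebra.norm_le_one_of_mem_unitary {u : A} (hu : u ∈ unitary A) : ‖u‖ ≤ 1 :=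
  (star_mul_self_le_one_iff u).mp (Unitary.star_mul_self_of_mem hu).le

end CStarAlgebra

theorem isUnit_one_sub_smul_of_norm_le_one {𝕜 A : Type*} [NormedField 𝕜] [NormedRing A]
    [NormedAlgebra 𝕜 A] [HasSummableGeomSeries A] {a : A} (ha : ‖a‖ ≤ 1) {z : 𝕜}
    (hz : ‖z‖ < 1) : IsUnit (1 - z • a) :=
  isUnit_one_sub_of_norm_lt_one <| by
    rw [norm_smul]; exact (mul_le_of_le_one_right (norm_nonneg z) ha).trans_lt hz

section Hilbert

variable {H D : Type*} [NormedAddCommGroup H] [InnerProductSpace ℂ H] [CompleteSpace H]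
  [NormedAddCommGroup D] [InnerProductSpace ℂ D] [CompleteSpace D]

theorem CFC.sqrt_conj_of_isometry {V : D →L[ℂ] H} (hV : adjoint V ∘L V = 1) {A : D →L[ℂ] D}
    (hA : 0 ≤ A) : CFC.sqrt (V ∘L A ∘L adjoint V) = V ∘L CFC.sqrt A ∘L adjoint V := by
  have hsqrt := (nonneg_iff_isPositive _).mp (CFC.sqrt_nonneg A)
  refine CFC.sqrt_unique ?_ ((nonneg_iff_isPositive _).mpr (hsqrt.conj_adjoint V))
  calc (V ∘L CFC.sqrt A ∘L adjoint V) * (V ∘L CFC.sqrt A ∘L adjoint V)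
      = V ∘L (CFC.sqrt A * (adjoint V ∘L V) * CFC.sqrt A) ∘L adjoint V := by
        simp only [mul_def, comp_assoc]
    _ = V ∘L A ∘L adjoint V := by rw [hV, mul_one, CFC.sqrt_mul_sqrt_self A hA]

variable {U : H →L[ℂ] H} {B : D →L[ℂ] H} {Γ : D →L[ℂ] D} {T : H →L[ℂ] H}

theorem apply_adjoint_apply_of_mem_unitary (hU : U ∈ unitary (H →L[ℂ] H)) (x : H) :
    U (adjoint U x) = x := by
  simpa [star_eq_adjoint] using congr($(Unitary.mul_star_self_of_mem hU) x)

theorem adjoint_apply_apply_of_mem_unitary (hU : U ∈ unitary (H →L[ℂ] H)) (x : H) :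
    adjoint U (U x) = x := by
  simpa [star_eq_adjoint] using congr($(Unitary.star_mul_self_of_mem hU) x)

theorem adjoint_comp_self_of_mem_unitary_of_isometry (hU : U ∈ unitary (H →L[ℂ] H))
    (hB : adjoint B ∘L B = 1) : adjoint (adjoint U ∘L B) ∘L (adjoint U ∘L B) = 1 := by
  rw [adjoint_comp, adjoint_adjoint, comp_assoc, ← comp_assoc U, ← mul_def, ← star_eq_adjoint,
    Unitary.mul_star_self_of_mem hU]
  simpa only [one_def, id_comp] using hB

theorem adjoint_eq_of_eq_add_comp (hT : T = U + B ∘L (Γ - 1) ∘L adjoint B ∘L U) :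
    adjoint T = adjoint U + adjoint U ∘L B ∘L (adjoint Γ - 1) ∘L adjoint B := by
  subst hT
  simp [adjoint_comp, adjoint_one, comp_assoc]

theorem adjoint_comp_comp_eq_of_eq_add_comp (hU : U ∈ unitary (H →L[ℂ] H))
    (hB : adjoint B ∘L B = 1) (hT : T = U + B ∘L (Γ - 1) ∘L adjoint B ∘L U) :
    adjoint B ∘L T ∘L adjoint U ∘L B = Γ := by
  have hBB (x : D) : adjoint B (B x) = x := congr($hB x)
  ext x
  simp [hT, apply_adjoint_apply_of_mem_unitary hU, hBB]

theorem one_sub_mul_star_eq_of_eq_add_comp (hU : U ∈ unitary (H →L[ℂ] H))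
    (hB : adjoint B ∘L B = 1) (hT : T = U + B ∘L (Γ - 1) ∘L adjoint B ∘L U) :
    1 - T * star T = B ∘L (1 - Γ * star Γ) ∘L adjoint B := by
  have hBB (x : D) : adjoint B (B x) = x := congr($hB x)
  rw [star_eq_adjoint, adjoint_eq_of_eq_add_comp hT, hT]
  ext x
  simp only [sub_comp, comp_sub, sub_apply, one_apply_eq_self, mul_apply_eq_comp, add_apply,
    comp_apply, map_add, map_sub, apply_adjoint_apply_of_mem_unitary hU, hBB, add_sub_cancel]
  abel

theorem one_sub_star_mul_eq_of_eq_add_comp (hU : U ∈ unitary (H →L[ℂ] H))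
    (hB : adjoint B ∘L B = 1) (hT : T = U + B ∘L (Γ - 1) ∘L adjoint B ∘L U) :
    1 - star T * T = (adjoint U ∘L B) ∘L (1 - star Γ * Γ) ∘L adjoint (adjoint U ∘L B) := by
  have hBB (x : D) : adjoint B (B x) = x := congr($hB x)
  rw [star_eq_adjoint, adjoint_eq_of_eq_add_comp hT, hT]
  ext x
  simp only [sub_comp, comp_sub, sub_apply, one_apply_eq_self, mul_apply_eq_comp, add_apply,
    comp_apply, map_add, map_sub, adjoint_comp, adjoint_adjoint,
    adjoint_apply_apply_of_mem_unitary hU, hBB, add_sub_cancel]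
  abel

theorem norm_le_one_of_eq_add_comp (hU : U ∈ unitary (H →L[ℂ] H)) (hB : adjoint B ∘L B = 1)
    (hΓ : ‖Γ‖ ≤ 1) (hT : T = U + B ∘L (Γ - 1) ∘L adjoint B ∘L U) : ‖T‖ ≤ 1 := by
  refine (CStarAlgebra.star_mul_self_le_one_iff T).mp (sub_nonneg.mp ?_)
  rw [one_sub_star_mul_eq_of_eq_add_comp hU hB hT, nonneg_iff_isPositive]
  exact ((nonneg_iff_isPositive _).mp
    (CStarAlgebra.one_sub_star_mul_self_nonneg hΓ)).conj_adjoint _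

theorem adjoint_comp_sqrt_one_sub_mul_star_eq (hU : U ∈ unitary (H →L[ℂ] H))
    (hB : adjoint B ∘L B = 1) (hΓ : ‖Γ‖ ≤ 1) (hT : T = U + B ∘L (Γ - 1) ∘L adjoint B ∘L U) :
    adjoint B ∘L CFC.sqrt (1 - T * star T) = CFC.sqrt (1 - Γ * star Γ) ∘L adjoint B := by
  rw [one_sub_mul_star_eq_of_eq_add_comp hU hB hT,
    CFC.sqrt_conj_of_isometry hB (CStarAlgebra.one_sub_mul_star_self_nonneg hΓ), ← comp_assoc, hB]
  simp only [one_def, id_comp]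

theorem sqrt_one_sub_star_mul_comp_eq (hU : U ∈ unitary (H →L[ℂ] H))
    (hB : adjoint B ∘L B = 1) (hΓ : ‖Γ‖ ≤ 1) (hT : T = U + B ∘L (Γ - 1) ∘L adjoint B ∘L U) :
    CFC.sqrt (1 - star T * T) ∘L adjoint U ∘L B =
      adjoint U ∘L B ∘L CFC.sqrt (1 - star Γ * Γ) := by
  have hV := adjoint_comp_self_of_mem_unitary_of_isometry hU hB
  rw [one_sub_star_mul_eq_of_eq_add_comp hU hB hT,
    CFC.sqrt_conj_of_isometry hV (CStarAlgebra.one_sub_star_mul_self_nonneg hΓ), comp_assoc,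
    comp_assoc (CFC.sqrt _), hV]
  rfl

theorem one_sub_smul_adjoint_eq_mul_of_eq_add_comp
    (hT : T = U + B ∘L (Γ - 1) ∘L adjoint B ∘L U) {z : ℂ} (hUz : IsUnit (1 - z • adjoint U)) :
    1 - z • adjoint T = (1 - z • adjoint U) *
      (1 - (z • Ring.inverse (1 - z • adjoint U) ∘L adjoint U ∘L B) ∘L
        (adjoint Γ - 1) ∘L adjoint B) := by
  have hG : (1 - z • adjoint U) ∘L Ring.inverse (1 - z • adjoint U) = 1 :=
    Ring.mul_inverse_cancel _ hUz
  simp only [mul_sub, mul_one, mul_def, comp_smul, smul_comp, ← comp_assoc, hG]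
  simp only [adjoint_eq_of_eq_add_comp hT, one_def, id_comp, smul_add, comp_assoc]
  abel

theorem compression_resolvent_eq (hT : T = U + B ∘L (Γ - 1) ∘L adjoint B ∘L U) {z : ℂ}
    (hUz : IsUnit (1 - z • adjoint U)) (hTz : IsUnit (1 - z • adjoint T)) {F₁ : D →L[ℂ] D}
    (hF₁ : F₁ = z • (adjoint B ∘L Ring.inverse (1 - z • adjoint U) ∘L adjoint U ∘L B)) :
    IsUnit (1 - F₁ ∘L (adjoint Γ - 1)) ∧
      z • (adjoint B ∘L Ring.inverse (1 - z • adjoint T) ∘L adjoint U ∘L B) =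
        Ring.inverse (1 - F₁ ∘L (adjoint Γ - 1)) ∘L F₁ := by
  set X := z • Ring.inverse (1 - z • adjoint U) ∘L adjoint U ∘L B
  set C := (adjoint Γ - 1) ∘L adjoint B
  have hfac := one_sub_smul_adjoint_eq_mul_of_eq_add_comp hT hUz
  have hBX : adjoint B ∘L X = F₁ := by rw [hF₁, comp_smul]
  have hCX : C ∘L X = (adjoint Γ - 1) ∘L F₁ := by rw [comp_assoc, hBX]
  have hXC : IsUnit (1 - X ∘L C) :=
    (Units.isUnit_units_mul hUz.unit _).mp (by rwa [IsUnit.unit_spec, ← hfac])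
  refine ⟨(isUnit_one_sub_comp_comm _ _).mpr (hCX ▸ (isUnit_one_sub_comp_comm X C).mp hXC), ?_⟩
  calc z • (adjoint B ∘L Ring.inverse (1 - z • adjoint T) ∘L adjoint U ∘L B)
      = adjoint B ∘L Ring.inverse (1 - X ∘L C) ∘L X := by
        rw [hfac, Ring.inverse_mul (Or.inl hUz), mul_def]
        simp only [X, C, comp_smul, comp_assoc]
    _ = F₁ ∘L Ring.inverse (1 - (adjoint Γ - 1) ∘L F₁) := by
        rw [inverse_one_sub_comp_comp, ← comp_assoc, hBX, hCX]
    _ = Ring.inverse (1 - F₁ ∘L (adjoint Γ - 1)) ∘L F₁ := (inverse_one_sub_comp_comp _ _).symm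

end Hilbert

set_option maxHeartbeats 400000 in
/-- Equation (4.3)/(A.2): the characteristic function of the contraction
`T = U + B (Γ - I) B* U` (with `U` unitary, `B` an isometry, `Γ` a strict contraction)
satisfies
`B* (-T + z D_{T*} (I - z T*)⁻¹ D_T) U* B = -Γ + D_{Γ*} [I - F₁(z)(Γ* - I)]⁻¹ F₁(z) D_Γ`,
where `F₁(z) = z B* (I - z U*)⁻¹ U* B`, `D_A = (I - A*A)^{1/2}`, and
`I - F₁(z)(Γ* - I)` is invertible for `z` in the open unit disc. -/
theorem characteristic_function_formula'
    {H D : Type*} [NormedAddCommGroup H] [InnerProductSpace ℂ H] [CompleteSpace H]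
    [NormedAddCommGroup D] [InnerProductSpace ℂ D] [CompleteSpace D]
    (U : H →L[ℂ] H) (hU : U ∈ unitary (H →L[ℂ] H))
    (B : D →L[ℂ] H) (hB : ∀ x : D, ‖B x‖ = ‖x‖)
    (Γ : D →L[ℂ] D) (hΓ : ∀ x : D, x ≠ 0 → ‖Γ x‖ < ‖x‖)
    (T : H →L[ℂ] H) (hT : T = U + B ∘L (Γ - 1) ∘L adjoint B ∘L U)
    (z : ℂ) (hz : ‖z‖ < 1)
    (F₁ : D →L[ℂ] D)
    (hF₁ : F₁ = z • (adjoint B ∘L Ring.inverse (1 - z • adjoint U) ∘L adjoint U ∘L B)) :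
    IsUnit ((1 : D →L[ℂ] D) - F₁ ∘L (adjoint Γ - 1)) ∧
    adjoint B ∘L
        (-T + z • (CFC.sqrt (1 - T * star T) ∘L Ring.inverse (1 - z • adjoint T) ∘L
          CFC.sqrt (1 - star T * T))) ∘L adjoint U ∘L B =
      -Γ + CFC.sqrt (1 - Γ * star Γ) ∘L
        Ring.inverse ((1 : D →L[ℂ] D) - F₁ ∘L (adjoint Γ - 1)) ∘L F₁ ∘L
          CFC.sqrt (1 - star Γ * Γ) := by
  have hBB : adjoint B ∘L B = 1 := B.norm_map_iff_adjoint_comp_self.mp hB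
  have hΓ_le : ‖Γ‖ ≤ 1 := opNorm_le_bound _ zero_le_one fun x => by
    rcases eq_or_ne x 0 with rfl | hx
    · simp
    · simpa using (hΓ x hx).le
  have hUz : IsUnit (1 - z • adjoint U) := isUnit_one_sub_smul_of_norm_le_one
    (by simpa [star_eq_adjoint] using
      CStarAlgebra.norm_le_one_of_mem_unitary (Unitary.star_mem hU)) hz
  have hTz : IsUnit (1 - z • adjoint T) := isUnit_one_sub_smul_of_norm_le_one
    (by rw [← star_eq_adjoint, norm_star]; exact norm_le_one_of_eq_add_comp hU hBB hΓ_le hT) hz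
  obtain ⟨hunit, hres⟩ := compression_resolvent_eq hT hUz hTz hF₁
  refine ⟨hunit, ?_⟩
  calc _ = -(adjoint B ∘L T ∘L adjoint U ∘L B) +
        z • ((adjoint B ∘L CFC.sqrt (1 - T * star T)) ∘L Ring.inverse (1 - z • adjoint T) ∘L
          (CFC.sqrt (1 - star T * T) ∘L adjoint U ∘L B)) := by
        simp only [add_comp, comp_add, neg_comp, comp_neg, smul_comp, comp_smul, comp_assoc]
    _ = -Γ + CFC.sqrt (1 - Γ * star Γ) ∘L
          (z • (adjoint B ∘L Ring.inverse (1 - z • adjoint T) ∘L adjoint U ∘L B)) ∘L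
            CFC.sqrt (1 - star Γ * Γ) := by
        rw [adjoint_comp_comp_eq_of_eq_add_comp hU hBB hT,
          adjoint_comp_sqrt_one_sub_mul_star_eq hU hBB hΓ_le hT,
          sqrt_one_sub_star_mul_comp_eq hU hBB hΓ_le hT]
        simp only [smul_comp, comp_smul, comp_assoc]
    _ = _ := by rw [hres, comp_assoc]
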